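/- arXiv:1211.5755 — 2 statements merged into one kernel-verified Lean document; each statement's English description precedes it below -/
import Mathlib

section
/- Let d = 2m−1 with m ≥ 4 and P ⊂ ℝ^d the simplex with vertices 0, e₁,…,e_{d−1}, (m−1)(e₁+⋯+e_{d−1}) + m·e_d. Then 2P has the integer decomposition property (so μ_midp(P) = 2), kP fails (IDP) for every odd k with 3 ≤ k ≤ m−1, and kP has (IDP) for all k ≥ m. Hence μ_idp(P) = m−1 if m is odd and μ_idp(P) = m if m is even. -/
open scoped BigOperators Pointwise

/-- Points of `ℝ^N`. -/
abbrev Pt (N : ℕ) := Fin N → ℝ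

/-- A point has integer coordinates. -/
def IsLat {N : ℕ} (x : Pt N) : Prop := ∀ i, ∃ z : ℤ, x i = (z : ℝ)

/-- Lattice points of a set. -/
def latPts {N : ℕ} (P : Set (Pt N)) : Set (Pt N) := {x ∈ P | IsLat x}

/-- The dilated polytope `kP`. -/
def dil {N : ℕ} (k : ℕ) (P : Set (Pt N)) : Set (Pt N) := (k : ℝ) • P

/-- `α` is a sum of `k` lattice points of `P`. -/
def DecomposesIn {N : ℕ} (P : Set (Pt N)) (k : ℕ) (α : Pt N) : Prop :=
  ∃ f : Fin k → Pt N, (∀ i, f i ∈ latPts P) ∧ α = ∑ i, f i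

/-- The integer decomposition property. -/
def HasIDP {N : ℕ} (P : Set (Pt N)) : Prop :=
  ∀ k : ℕ, 0 < k → ∀ α ∈ latPts (dil k P), DecomposesIn P k α

/-- Very ampleness: decomposition holds for all sufficiently large `k`. -/
def VeryAmple {N : ℕ} (P : Set (Pt N)) : Prop :=
  ∃ k₀ : ℕ, ∀ k, k₀ ≤ k → ∀ α ∈ latPts (dil k P), DecomposesIn P k α

/-- An integral convex polytope: the convex hull of finitely many lattice points
(which include all its vertices). -/
def IsIntegralPolytope {N : ℕ} (P : Set (Pt N)) : Prop :=
  ∃ V : Finset (Pt N), (∀ v ∈ V, IsLat v) ∧ P = convexHull ℝ (V : Set (Pt N))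

/-- Dimension of a polytope: the rank of the direction of its affine span. -/
noncomputable def polyDim {N : ℕ} (P : Set (Pt N)) : ℕ :=
  Module.finrank ℝ (affineSpan ℝ P).direction

/-- Lattice points of the cone `C(P) ⊂ ℝ^{N+1}` generated by `P̃ = P × {1}`;
a point of `ℝ^{N+1}` is represented as a pair `(x, deg)`. -/
def coneLat {N : ℕ} (P : Set (Pt N)) : Set (Pt N × ℝ) :=
  {p | (∃ (m : ℕ) (c : Fin m → ℝ) (w : Fin m → Pt N),
        (∀ i, 0 ≤ c i ∧ w i ∈ P) ∧ p.1 = ∑ i, c i • w i ∧ p.2 = ∑ i, c i)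
    ∧ IsLat p.1 ∧ ∃ z : ℤ, p.2 = (z : ℝ)}

/-- The monoid `ℤ_{≥0}(P̃ ∩ ℤ^{N+1})` generated by the degree-one lattice points of the cone. -/
def genMonoid {N : ℕ} (P : Set (Pt N)) : Set (Pt N × ℝ) :=
  {p | ∃ (m : ℕ) (f : Fin m → Pt N), (∀ i, f i ∈ latPts P) ∧
        p.1 = ∑ i, f i ∧ p.2 = (m : ℝ)}

/-- `H` is the minimal Hilbert basis of the cone `C(P)`. -/
def IsMinHilbertBasis {N : ℕ} (P : Set (Pt N)) (H : Set (Pt N × ℝ)) : Prop :=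
  (H.Finite ∧ H ⊆ coneLat P ∧
      coneLat P ⊆ (AddSubmonoid.closure H : Set (Pt N × ℝ))) ∧
  ∀ H' : Set (Pt N × ℝ),
    (H'.Finite ∧ H' ⊆ coneLat P ∧
      coneLat P ⊆ (AddSubmonoid.closure H' : Set (Pt N × ℝ))) → H ⊆ H'

/-- `v` lists the vertices of an empty `d`-simplex contained in `P`. -/
def EmptySimplexIn {N : ℕ} (P : Set (Pt N)) (d : ℕ) (v : Fin (d+1) → Pt N) : Prop :=
  (∀ i, v i ∈ latPts P) ∧ AffineIndependent ℝ v ∧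
    ∀ x ∈ convexHull ℝ (Set.range v), IsLat x → x ∈ Set.range v

/-- `Box(S)` of a simplex with vertex list `v`: lattice points
`Σ rᵢ (vᵢ, 1)` with `0 ≤ rᵢ < 1`. -/
def boxSimplex {N d : ℕ} (v : Fin (d+1) → Pt N) : Set (Pt N × ℝ) :=
  {p | ∃ r : Fin (d+1) → ℝ, (∀ i, 0 ≤ r i ∧ r i < 1) ∧
      p.1 = ∑ i, r i • v i ∧ p.2 = ∑ i, r i ∧ IsLat p.1 ∧ ∃ z : ℤ, p.2 = (z : ℝ)}

/-- `Box(P)`: holes of `P`, i.e. box points of empty `d`-simplices in `P` that are not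
nonnegative integer combinations of `P̃ ∩ ℤ^{N+1}`. -/
def boxP {N : ℕ} (P : Set (Pt N)) (d : ℕ) : Set (Pt N × ℝ) :=
  (⋃ v ∈ {v : Fin (d+1) → Pt N | EmptySimplexIn P d v}, boxSimplex v) \ genMonoid P

/-- Ehrhart counting function `|nP ∩ ℤ^N|`. -/
noncomputable def ehr {N : ℕ} (P : Set (Pt N)) (n : ℕ) : ℕ := (latPts (dil n P)).ncard

/-- The `δ`-vector of a `d`-dimensional polytope, via finite differences of the
Ehrhart counting function. -/
noncomputable def deltaVec {N : ℕ} (P : Set (Pt N)) (d i : ℕ) : ℤ :=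
  ∑ j ∈ Finset.range (i+1), (-1)^j * ((d+1).choose j) * (ehr P (i - j) : ℤ)

/-- Vertex set of the simplex of Example 2.3: `0`, `e₁, …, e_{d-1}`, and
`(m-1)(e₁+⋯+e_{d-1}) + m·e_d`, where `d = 2m-1`. -/
def Vm (m : ℕ) : Set (Pt (2*m-1)) :=
  {0} ∪ {x : Pt (2*m-1) | ∃ k : Fin (2*m-1), (k : ℕ) < 2*m-2 ∧
          x = fun l => if l = k then (1:ℝ) else 0}
    ∪ {(fun k => if (k : ℕ) < 2*m-2 then ((m:ℝ) - 1) else (m:ℝ) : Pt (2*m-1))}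

/-- The simplex of Example 2.3 in dimension `d = 2m-1`. -/
def Pm (m : ℕ) : Set (Pt (2*m-1)) := convexHull ℝ (Vm m)

/-!
Write `𝟙` for the all-ones vector and `w₀, …, w_{d-1}` for the nonzero vertices of `P`, the apex
last. Since `w₀ + ⋯ + w_{d-1} = m • 𝟙`, we have `𝟙 ∈ 2P`, and the facet inequalities of `P` show
that the lattice points of `nP` are exactly the points `t • 𝟙 + ∑ κᵢ • wᵢ` with `t < m`, `κ ∈ ℕ^d`
and weight `2t + ∑ κᵢ ≤ n` (`t` is the last coordinate mod `m`). So a lattice point of `ℓ(kP)`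
splits into `ℓ` lattice points of `kP` as soon as its `t` items of size 2 and `∑ κᵢ` items of
size 1 can be packed into `ℓ` bins of capacity `k`; this succeeds when `k` is even or `k ≥ m > t`.
For odd `k < m`, the point `k • 𝟙 ∈ 2(kP)` is not a sum of two lattice points of `kP`: neither
summand can involve the apex, whose last coordinate is `m > k`, so `k = t₀ + t₁` with
`2t₀, 2t₁ ≤ k`, which is impossible.
-/

section Dilation

variable {𝕜 E : Type*} [Field 𝕜] [LinearOrder 𝕜] [IsStrictOrderedRing 𝕜]
  [AddCommGroup E] [Module 𝕜 E]

theorem StarConvex.smul_subset_smul {s : Set E} (hs : StarConvex 𝕜 0 s) {a b : 𝕜}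
    (ha : 0 ≤ a) (hab : a ≤ b) : a • s ⊆ b • s := by
  rintro _ ⟨y, hy, rfl⟩
  rcases ha.eq_or_lt with rfl | ha
  · simpa using Set.smul_mem_smul_set (a := b) (hs.mem ⟨y, hy⟩)
  · have hy' : y ∈ (b / a) • s := hs.mem_smul hy ((one_le_div ha).2 hab)
    simpa [smul_smul, mul_div_cancel₀ b ha.ne'] using Set.smul_mem_smul_set (a := a) hy'

theorem Convex.sum_smul_mem_smul {ι : Type*} {s : Set E} (hs : Convex 𝕜 s) (hne : s.Nonempty)
    (F : Finset ι) {c : ι → 𝕜} {w : ι → E} (hc : ∀ i ∈ F, 0 ≤ c i) (hw : ∀ i ∈ F, w i ∈ s) :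
    ∑ i ∈ F, c i • w i ∈ (∑ i ∈ F, c i) • s := by
  classical
  induction F using Finset.induction_on with
  | empty => simp [Set.zero_smul_set hne]
  | insert a F ha ih =>
    simp only [Finset.mem_insert, forall_eq_or_imp] at hc hw
    rw [Finset.sum_insert ha, Finset.sum_insert ha,
      hs.add_smul hc.1 (Finset.sum_nonneg hc.2)]
    exact Set.add_mem_add (Set.smul_mem_smul_set hw.1) (ih hc.2 hw.2)

end Dilation

theorem dil_dil {N : ℕ} (a b : ℕ) (P : Set (Pt N)) : dil a (dil b P) = dil (a * b) P := by
  simp only [dil, smul_smul, Nat.cast_mul]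

theorem le_of_mem_dil_convexHull {N n : ℕ} {V : Set (Pt N)} (f : Pt N →ₗ[ℝ] ℝ) {β : ℝ}
    (hV : ∀ v ∈ V, f v ≤ β) {x : Pt N} (hx : x ∈ dil n (convexHull ℝ V)) : f x ≤ n * β := by
  obtain ⟨y, hy, rfl⟩ := hx
  have hy : f y ≤ β := convexHull_min hV (convex_halfSpace_le f.isLinear β) hy
  rw [f.map_smul, smul_eq_mul]
  exact mul_le_mul_of_nonneg_left hy n.cast_nonneg

theorem Int.add_sub_one_mul_le_of_sub_one_mul_le {m t s z : ℤ} (ht : 0 ≤ t) (htm : t < m)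
    (h : (m - 1) * (t + m * s) ≤ m * z) : t + (m - 1) * s ≤ z := by
  have : m * (-1) < m * (z - t - (m - 1) * s) := by nlinarith
  have := lt_of_mul_lt_mul_left this (by omega)
  omega

theorem Nat.exists_le_sum_eq {ι : Type*} [Fintype ι] (g : ι → ℕ) {d : ℕ} (hd : d ≤ ∑ i, g i) :
    ∃ g' ≤ g, ∑ i, g' i = d := by
  classical
  induction d with
  | zero => exact ⟨0, fun _ => Nat.zero_le _, by simp⟩
  | succ d ih =>
    obtain ⟨g', hle, hsum⟩ := ih (by omega)
    obtain ⟨r, hr⟩ : ∃ r, g' r < g r := by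
      by_contra! h
      have := Finset.sum_le_sum fun i (_ : i ∈ Finset.univ) => h i
      omega
    refine ⟨Function.update g' r (g' r + 1), fun i => ?_, ?_⟩
    · rcases eq_or_ne i r with rfl | h
      · simpa using hr
      · simpa [h] using hle i
    · rw [Finset.sum_update_of_mem (Finset.mem_univ r), ← hsum,
        ← Finset.add_sum_erase _ _ (Finset.mem_univ r), Finset.sdiff_singleton_eq_erase]
      ring

theorem exists_packing_into_bins {ι : Type*} [Fintype ι] (k : ℕ) :
    ∀ (l t : ℕ) (g : ι → ℕ), 2 * t + ∑ i, g i ≤ l * k → t ≤ l * (k / 2) →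
      ∃ (ts : Fin l → ℕ) (G : Fin l → ι → ℕ),
        ∑ j, ts j = t ∧ ∑ j, G j = g ∧ ∀ j, 2 * ts j + ∑ i, G j i ≤ k := by
  intro l
  induction l with
  | zero =>
    intro t g hw ht
    have hg : g = 0 := funext fun i =>
      Finset.sum_eq_zero_iff.1 (by omega) i (Finset.mem_univ i)
    exact ⟨finZeroElim, finZeroElim, by simp; omega, by simp [hg], finZeroElim⟩
  | succ l ih =>
    intro t g hw ht
    rw [add_one_mul] at hw ht
    -- greedy: the first bin takes as many items of size 2 as fit, then fills up with size 1
    obtain ⟨t₁, ht₁⟩ : ∃ t₁, t₁ = min t (k / 2) := ⟨_, rfl⟩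
    obtain ⟨g₁, hle, hsum⟩ := Nat.exists_le_sum_eq g (d := min (∑ i, g i) (k - 2 * t₁))
      (min_le_left _ _)
    have hrest : ∑ i, (g - g₁) i = ∑ i, g i - ∑ i, g₁ i :=
      Finset.sum_tsub_distrib _ fun i _ => hle i
    have hlk : 2 * (l * (k / 2)) ≤ l * k := by
      rw [mul_left_comm]; exact Nat.mul_le_mul_left l (Nat.mul_div_le k 2)
    obtain ⟨ts, G, hts, hG, hbins⟩ :=
      ih (t - t₁) (g - g₁) (by rw [hrest, hsum]; omega) (by omega)
    refine ⟨Fin.cons t₁ ts, Fin.cons g₁ G, ?_, ?_, fun j => ?_⟩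
    · rw [Fin.sum_univ_succ]; simp only [Fin.cons_zero, Fin.cons_succ]; omega
    · rw [Fin.sum_univ_succ]; simp only [Fin.cons_zero, Fin.cons_succ, hG]
      exact add_tsub_cancel_of_le hle
    · refine Fin.cases ?_ (fun j => ?_) j
      · simp only [Fin.cons_zero]; omega
      · simpa using hbins j

namespace Pm

variable {m : ℕ}

def last (hm : 0 < m) : Fin (2 * m - 1) := ⟨2 * m - 2, by omega⟩

theorem lt_iff_ne_last (hm : 0 < m) {j : Fin (2 * m - 1)} : (j : ℕ) < 2 * m - 2 ↔ j ≠ last hm := by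
  have := j.isLt
  rw [Ne, Fin.ext_iff]
  simp only [last]
  omega

/-- The nonzero vertices of `Pm m`: `eᵢ` at the indices `i < 2m-2`, the apex at the last one. -/
def vertex (m : ℕ) (i : Fin (2 * m - 1)) : Pt (2 * m - 1) :=
  if (i : ℕ) < 2 * m - 2 then fun l => if l = i then 1 else 0
  else fun k => if (k : ℕ) < 2 * m - 2 then (m : ℝ) - 1 else m

theorem vertex_apply (hm : 0 < m) (i j : Fin (2 * m - 1)) :
    vertex m i j = (if i = last hm then (m : ℝ) - 1 else 0) + if i = j then 1 else 0 := by
  simp only [vertex, lt_iff_ne_last hm]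
  by_cases hi : i = last hm <;> by_cases hj : j = last hm <;> simp [hi, hj, eq_comm]

theorem Vm_eq (hm : 0 < m) : Vm m = insert 0 (Set.range (vertex m)) := by
  ext x
  simp only [Vm, Set.mem_union, Set.mem_singleton_iff, Set.mem_ofPred_eq, Set.mem_insert_iff,
    Set.mem_range]
  constructor
  · rintro ((h | ⟨k, hk, rfl⟩) | rfl)
    · exact Or.inl h
    · exact Or.inr ⟨k, by simp [vertex, hk]⟩
    · exact Or.inr ⟨last hm, by simp [vertex, last]⟩
  · rintro (h | ⟨i, rfl⟩)
    · exact Or.inl (Or.inl h)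
    · by_cases hi : (i : ℕ) < 2 * m - 2
      · exact Or.inl (Or.inr ⟨i, hi, by simp [vertex, hi]⟩)
      · exact Or.inr (by simp [vertex, hi])

theorem convex (m : ℕ) : Convex ℝ (Pm m) := convex_convexHull ℝ _

theorem zero_mem (m : ℕ) : (0 : Pt (2 * m - 1)) ∈ Pm m :=
  subset_convexHull ℝ _ (Or.inl (Or.inl rfl))

theorem vertex_mem (hm : 0 < m) (i : Fin (2 * m - 1)) : vertex m i ∈ Pm m :=
  subset_convexHull ℝ _ (by rw [Vm_eq hm]; exact Or.inr ⟨i, rfl⟩)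

theorem le_of_mem_dil (hm : 0 < m) (f : Pt (2 * m - 1) →ₗ[ℝ] ℝ) {β : ℝ} (h0 : 0 ≤ β)
    (hf : ∀ i, f (vertex m i) ≤ β) {n : ℕ} {x : Pt (2 * m - 1)} (hx : x ∈ dil n (Pm m)) :
    f x ≤ n * β := by
  refine le_of_mem_dil_convexHull f ?_ hx
  rw [Vm_eq hm]
  rintro v (rfl | ⟨i, rfl⟩)
  · simpa using h0
  · exact hf i

theorem sum_vertex (hm : 0 < m) : ∑ i, vertex m i = (m : ℝ) • (1 : Pt (2 * m - 1)) := by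
  ext j
  simp [Finset.sum_apply, vertex_apply hm, Finset.sum_add_distrib]

theorem one_mem_dil_two (hm : 0 < m) : (1 : Pt (2 * m - 1)) ∈ dil 2 (Pm m) := by
  have hsum := (convex m).sum_smul_mem_smul ⟨0, zero_mem m⟩ Finset.univ
    (c := fun _ => (1 : ℝ)) (w := vertex m) (fun _ _ => zero_le_one)
    (fun i _ => vertex_mem hm i)
  have hcard : (∑ _ : Fin (2 * m - 1), (1 : ℝ)) = 2 * m - 1 := by
    simp [Nat.cast_sub (by omega : 1 ≤ 2 * m)]
  simp only [one_smul, sum_vertex hm, hcard] at hsum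
  have hm' : (0 : ℝ) < m := by exact_mod_cast hm
  have h1 : (1 : Pt (2 * m - 1)) ∈ ((2 * m - 1) / m : ℝ) • Pm m := by
    have := Set.smul_mem_smul_set (a := (m : ℝ)⁻¹) hsum
    rwa [inv_smul_smul₀ hm'.ne', smul_smul, inv_mul_eq_div] at this
  refine ((convex m).starConvex (zero_mem m)).smul_subset_smul
    (div_nonneg (by linarith [(Nat.one_le_cast (α := ℝ)).2 hm]) hm'.le) ?_ h1
  rw [div_le_iff₀ hm']
  push_cast
  linarith

def latticePt (m t : ℕ) (κ : Fin (2 * m - 1) → ℕ) : Pt (2 * m - 1) :=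
  (t : ℝ) • 1 + ∑ i, (κ i : ℝ) • vertex m i

theorem latticePt_apply (hm : 0 < m) (t : ℕ) (κ : Fin (2 * m - 1) → ℕ) (j : Fin (2 * m - 1)) :
    latticePt m t κ j = ((t + (m - 1) * κ (last hm) + κ j : ℕ) : ℝ) := by
  simp [latticePt, Finset.sum_apply, vertex_apply hm, mul_add, Finset.sum_add_distrib,
    Nat.cast_sub hm]
  ring

theorem latticePt_apply_last (hm : 0 < m) (t : ℕ) (κ : Fin (2 * m - 1) → ℕ) :
    latticePt m t κ (last hm) = ((t + m * κ (last hm) : ℕ) : ℝ) := by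
  rw [latticePt_apply hm, add_assoc, ← add_one_mul, Nat.sub_add_cancel (show 1 ≤ m from hm)]

theorem isLat_latticePt (m t : ℕ) (κ : Fin (2 * m - 1) → ℕ) : IsLat (latticePt m t κ) := by
  rcases Nat.eq_zero_or_pos m with rfl | hm
  · exact fun j => j.elim0
  · exact fun j => ⟨_, by rw [latticePt_apply hm]; rfl⟩

theorem sum_latticePt {ι : Type*} (s : Finset ι) (ts : ι → ℕ) (G : ι → Fin (2 * m - 1) → ℕ) :
    ∑ j ∈ s, latticePt m (ts j) (G j) = latticePt m (∑ j ∈ s, ts j) (∑ j ∈ s, G j) := by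
  simp only [latticePt, Finset.sum_add_distrib, Nat.cast_sum, Finset.sum_smul, Finset.sum_apply]
  rw [Finset.sum_comm]

theorem latticePt_mem_dil (hm : 0 < m) {n t : ℕ} {κ : Fin (2 * m - 1) → ℕ}
    (hw : 2 * t + ∑ i, κ i ≤ n) : latticePt m t κ ∈ dil n (Pm m) := by
  have hone : (t : ℝ) • (1 : Pt (2 * m - 1)) ∈ ((2 * t : ℕ) : ℝ) • Pm m := by
    convert Set.smul_mem_smul_set (a := (t : ℝ)) (one_mem_dil_two hm) using 1
    rw [dil, smul_smul, Nat.cast_mul, Nat.cast_ofNat, mul_comm (2 : ℝ)]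
  have hvert := (convex m).sum_smul_mem_smul ⟨0, zero_mem m⟩ Finset.univ
    (c := fun i => (κ i : ℝ)) (fun i _ => (κ i).cast_nonneg) (fun i _ => vertex_mem hm i)
  have hsum := Set.add_mem_add hone hvert
  rw [← (convex m).add_smul (Nat.cast_nonneg _) (Finset.sum_nonneg fun i _ => (κ i).cast_nonneg),
    ← Nat.cast_sum, ← Nat.cast_add] at hsum
  exact ((convex m).starConvex (zero_mem m)).smul_subset_smul (Nat.cast_nonneg _)
    (Nat.cast_le.2 hw) hsum

theorem last_nonneg_of_mem_dil (hm : 0 < m) {n : ℕ} {x : Pt (2 * m - 1)}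
    (hx : x ∈ dil n (Pm m)) : 0 ≤ x (last hm) := by
  have hm' : (1 : ℝ) ≤ m := by exact_mod_cast hm
  have := le_of_mem_dil hm (-LinearMap.proj (last hm)) le_rfl (fun i => ?_) hx
  · simpa using this
  · simp only [LinearMap.neg_apply, LinearMap.coe_proj, Function.eval, vertex_apply hm]
    split_ifs <;> linarith

theorem mul_last_le_of_mem_dil (hm : 0 < m) {n : ℕ} {x : Pt (2 * m - 1)}
    (hx : x ∈ dil n (Pm m)) (j : Fin (2 * m - 1)) : ((m : ℝ) - 1) * x (last hm) ≤ m * x j := by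
  have hm' : (1 : ℝ) ≤ m := by exact_mod_cast hm
  have := le_of_mem_dil hm (((m : ℝ) - 1) • LinearMap.proj (last hm) - (m : ℝ) • LinearMap.proj j)
    le_rfl (fun i => ?_) hx
  · simpa [sub_nonpos] using this
  · simp only [LinearMap.sub_apply, LinearMap.smul_apply, LinearMap.coe_proj, Function.eval,
      vertex_apply hm, smul_eq_mul]
    split_ifs <;> nlinarith

theorem sum_sub_le_of_mem_dil (hm : 0 < m) {n : ℕ} {x : Pt (2 * m - 1)}
    (hx : x ∈ dil n (Pm m)) :
    (m : ℝ) * ∑ j, x j - (2 * m - 1) * (m - 1) * x (last hm) ≤ n * m := by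
  have hcard : ((2 * m - 1 : ℕ) : ℝ) = 2 * m - 1 := by
    rw [Nat.cast_sub (by omega), Nat.cast_mul, Nat.cast_ofNat, Nat.cast_one]
  have := le_of_mem_dil hm ((m : ℝ) • ∑ j, LinearMap.proj j
    - ((2 * m - 1) * (m - 1) : ℝ) • LinearMap.proj (last hm)) (Nat.cast_nonneg m) (fun i => ?_) hx
  · simpa using this
  · simp only [LinearMap.sub_apply, LinearMap.smul_apply, LinearMap.sum_apply,
      LinearMap.coe_proj, Function.eval, vertex_apply hm, smul_eq_mul, Finset.sum_add_distrib,
      Finset.sum_ite_eq, Finset.mem_univ, if_true, Finset.sum_const, Finset.card_univ,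
      Fintype.card_fin, nsmul_eq_mul, hcard]
    split_ifs <;> nlinarith

theorem sum_sub_latticePt (hm : 0 < m) (t : ℕ) (κ : Fin (2 * m - 1) → ℕ) :
    (m : ℝ) * ∑ j, latticePt m t κ j - (2 * m - 1) * (m - 1) * latticePt m t κ (last hm)
      = (2 * m - 1) * t + m * ∑ i, κ i := by
  simp only [latticePt_apply hm, Nat.cast_add, Nat.cast_mul, Finset.sum_add_distrib,
    Finset.sum_const, Finset.card_univ, Fintype.card_fin, nsmul_eq_mul, Nat.cast_sum,
    Nat.cast_sub hm, Nat.cast_sub (by omega : 1 ≤ 2 * m)]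
  push_cast
  ring

theorem exists_latticePt_eq (hm : 0 < m) {n : ℕ} {x : Pt (2 * m - 1)}
    (hx : x ∈ latPts (dil n (Pm m))) :
    ∃ t < m, ∃ κ : Fin (2 * m - 1) → ℕ, x = latticePt m t κ ∧ 2 * t + ∑ i, κ i ≤ n := by
  obtain ⟨hx, hlat⟩ := hx
  choose z hz using hlat
  set L := last hm
  obtain ⟨Q, hQ⟩ : ∃ Q : ℕ, z L = Q :=
    Int.eq_ofNat_of_zero_le (by exact_mod_cast hz L ▸ last_nonneg_of_mem_dil hm hx)
  set t := Q % m
  set s := Q / m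
  have ht : t < m := Nat.mod_lt Q hm
  have hzL : z L = t + m * s := by rw [hQ]; exact_mod_cast (Nat.mod_add_div Q m).symm
  have hge : ∀ j, (t : ℤ) + (m - 1) * s ≤ z j := fun j =>
    Int.add_sub_one_mul_le_of_sub_one_mul_le (Nat.cast_nonneg t) (by exact_mod_cast ht)
      (by rw [← hzL]; exact_mod_cast hz L ▸ hz j ▸ mul_last_le_of_mem_dil hm hx j)
  set κ : Fin (2 * m - 1) → ℕ := fun j => if j = L then s else (z j - t - (m - 1) * s).toNat
  have hx_eq : x = latticePt m t κ := by
    ext j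
    rw [hz j, latticePt_apply hm]
    have hzj : z j = ((t + (m - 1) * κ L + κ j : ℕ) : ℤ) := by
      by_cases hj : j = L
      · simp only [κ, hj, if_true, hzL]; push_cast [Nat.cast_sub hm]; ring
      · simp only [κ, hj, if_true, if_false, Nat.cast_add, Nat.cast_mul,
          Int.toNat_of_nonneg (by linarith [hge j] : (0 : ℤ) ≤ z j - t - (m - 1) * s)]
        push_cast [Nat.cast_sub hm]; ring
    exact_mod_cast hzj
  refine ⟨t, ht, κ, hx_eq, ?_⟩
  have h := sum_sub_le_of_mem_dil hm hx
  rw [hx_eq, sum_sub_latticePt hm] at h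
  have hw : m * (2 * t + ∑ i, κ i) ≤ m * n + t := by
    have : (m * (2 * t + ∑ i, κ i) : ℝ) ≤ m * n + t := by linear_combination h
    exact_mod_cast this
  have := Nat.lt_of_mul_lt_mul_left (a := m) (b := 2 * t + ∑ i, κ i) (c := n + 1)
    (by rw [Nat.mul_succ]; omega)
  omega

theorem hasIDP_dil (hm : 0 < m) {k : ℕ} (hk : Even k ∨ m ≤ k) : HasIDP (dil k (Pm m)) := by
  intro l hl x hx
  rw [dil_dil] at hx
  obtain ⟨t, htm, κ, rfl, hw⟩ := exists_latticePt_eq hm hx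
  -- a lattice point of `kP` carries at most `⌊k/2⌋` copies of `𝟙`
  have ht : t ≤ l * (k / 2) := by
    rcases hk with ⟨r, rfl⟩ | hmk
    · rw [mul_add] at hw
      rw [show (r + r) / 2 = r by omega]
      omega
    · obtain rfl | hl2 : l = 1 ∨ 2 ≤ l := by omega
      · omega
      · calc t ≤ 2 * (k / 2) := by omega
          _ ≤ l * (k / 2) := Nat.mul_le_mul_right _ hl2
  obtain ⟨ts, G, hts, hG, hbins⟩ := exists_packing_into_bins k l t κ hw ht
  refine ⟨fun j => latticePt m (ts j) (G j),
    fun j => ⟨latticePt_mem_dil hm (hbins j), isLat_latticePt _ _ _⟩, ?_⟩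
  rw [sum_latticePt, hts, hG]

theorem not_hasIDP_dil {k : ℕ} (hk : Odd k) (hkm : k < m) : ¬ HasIDP (dil k (Pm m)) := by
  have hm : 0 < m := by omega
  intro hidp
  have hx : latticePt m k 0 ∈ latPts (dil 2 (dil k (Pm m))) :=
    ⟨by rw [dil_dil]; exact latticePt_mem_dil hm (by simp), isLat_latticePt _ _ _⟩
  obtain ⟨f, hf, hsum⟩ := hidp 2 two_pos _ hx
  obtain ⟨t₀, -, κ₀, h₀, hw₀⟩ := exists_latticePt_eq hm (hf 0)
  obtain ⟨t₁, -, κ₁, h₁, hw₁⟩ := exists_latticePt_eq hm (hf 1)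
  have hlast : k + m * 0 = t₀ + m * κ₀ (last hm) + (t₁ + m * κ₁ (last hm)) := by
    have := congrFun hsum (last hm)
    rw [Finset.sum_apply, Fin.sum_univ_two, h₀, h₁, latticePt_apply_last hm,
      latticePt_apply_last hm, latticePt_apply_last hm] at this
    exact_mod_cast this
  have hzero : ∀ a, m * a ≤ k → a = 0 := fun a ha => by
    by_contra h
    have := Nat.le_mul_of_pos_right m (Nat.pos_of_ne_zero h)
    omega
  have ha₀ := hzero (κ₀ (last hm)) (by omega)
  have ha₁ := hzero (κ₁ (last hm)) (by omega)
  rw [ha₀, ha₁] at hlast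
  obtain ⟨r, rfl⟩ := hk
  omega

end Pm

/-- for `d = 2m-1`, `m ≥ 4`: `2P` has (IDP) (and `μ_midp(P) = 2`),
`kP` fails (IDP) for odd `3 ≤ k ≤ m-1`, `kP` has (IDP) for all `k ≥ m`, and
`μ_idp(P) = m-1` if `m` is odd, `m` if `m` is even. -/
theorem idp_behaviour_of_Pm (m : ℕ) (hm : 4 ≤ m) :
    HasIDP (dil 2 (Pm m)) ∧
    IsLeast {k : ℕ | 0 < k ∧ HasIDP (dil k (Pm m))} 2 ∧
    (∀ k, Odd k → 3 ≤ k → k ≤ m - 1 → ¬ HasIDP (dil k (Pm m))) ∧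
    (∀ k, m ≤ k → HasIDP (dil k (Pm m))) ∧
    IsLeast {k : ℕ | 0 < k ∧ ∀ n, k ≤ n → HasIDP (dil n (Pm m))}
      (if Odd m then m - 1 else m) := by
  have idp : ∀ k, Even k ∨ m ≤ k → HasIDP (dil k (Pm m)) := fun k => Pm.hasIDP_dil (by omega)
  have not_idp : ∀ k, Odd k → k < m → ¬ HasIDP (dil k (Pm m)) := fun k => Pm.not_hasIDP_dil
  have idp₂ := idp 2 (Or.inl even_two)
  refine ⟨idp₂, ⟨⟨two_pos, idp₂⟩, fun k ⟨hk, hidp⟩ => ?_⟩,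
    fun k hk _ hkm => not_idp k hk (by omega), fun k hk => idp k (Or.inr hk), ?_, ?_⟩
  · by_contra! h
    obtain rfl : k = 1 := by omega
    exact not_idp 1 odd_one (by omega) hidp
  · refine ⟨by split_ifs <;> omega, fun n hn => idp n ?_⟩
    rw [Nat.even_iff]
    split_ifs at hn with h <;> [have := Nat.odd_iff.1 h; skip] <;> omega
  · rintro k ⟨-, hk⟩
    by_contra! hlt
    have hodd : Odd ((if Odd m then m - 1 else m) - 1) := by
      rw [Nat.odd_iff]
      split_ifs with h <;> [have := Nat.odd_iff.1 h; have := Nat.not_odd_iff.1 h] <;> omega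
    exact not_idp _ hodd (by split_ifs <;> omega) (hk _ (by omega))
end

section
/- The Minkowski sum of two integral polytopes each having the integer decomposition property need not have it: the triangle T = conv{(0,0,0),(1,0,0),(0,1,0)} and the segment S = conv{(0,0,0),(1,1,3)} each possess (IDP), but their Minkowski sum T + S does not possess (IDP). -/
open scoped BigOperators Pointwise

/-!
Both `T` and `S` are unimodular, so a lattice point of `kT` or `kS` is visibly a sum of `k`
vertices. In `T + S` the height `z = 3μ` of a point `t + μ (1, 1, 3)` comes from the segment
alone. A lattice point at height `1` would have `μ = 1/3` and integral `x, y ≥ 1/3`, hence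
`x, y ≥ 1`, forcing `t₀ + t₁ ≥ 4/3`, which `T` does not allow. Yet
`(1, 1, 1) = 2 ((1/3, 1/3, 0) + (1/6, 1/6, 1/2))` lies in `2(T + S)`, and it is not a sum of
two lattice points of `T + S`: their heights would be nonnegative integers adding up to `1`.
-/

section Decomposition

variable {N : ℕ} {P : Set (Pt N)}

theorem zero_mem_latPts (h : (0 : Pt N) ∈ P) : (0 : Pt N) ∈ latPts P :=
  ⟨h, fun _ => ⟨0, by simp⟩⟩

theorem DecomposesIn.add {k l : ℕ} {α β : Pt N} (hα : DecomposesIn P k α)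
    (hβ : DecomposesIn P l β) : DecomposesIn P (k + l) (α + β) := by
  obtain ⟨f, hf, rfl⟩ := hα
  obtain ⟨g, hg, rfl⟩ := hβ
  refine ⟨Fin.append f g, Fin.addCases (by simpa using hf) (by simpa using hg), ?_⟩
  simp [Fin.sum_univ_add]

theorem decomposesIn_nsmul {u : Pt N} (hu : u ∈ latPts P) (k : ℕ) :
    DecomposesIn P k (k • u) :=
  ⟨fun _ => u, fun _ => hu, by simp⟩

theorem decomposesIn_nsmul_of_le (h0 : (0 : Pt N) ∈ P) {u : Pt N} (hu : u ∈ latPts P)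
    {a k : ℕ} (hak : a ≤ k) : DecomposesIn P k (a • u) := by
  obtain ⟨c, rfl⟩ := Nat.exists_eq_add_of_le hak
  simpa using (decomposesIn_nsmul hu a).add (decomposesIn_nsmul (zero_mem_latPts h0) c)

end Decomposition

theorem IsLat.exists_natCast_eq {N : ℕ} {x : Pt N} (hx : IsLat x) {i : Fin N} (h : 0 ≤ x i) :
    ∃ n : ℕ, x i = n := by
  obtain ⟨z, hz⟩ := hx i
  lift z to ℕ using by exact_mod_cast hz ▸ h
  exact ⟨z, hz⟩

theorem zero_mem_convexHull_insert_vec3 (s : Set (Pt 3)) :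
    (0 : Pt 3) ∈ convexHull ℝ (insert ![0, 0, 0] s) :=
  subset_convexHull ℝ _ (Set.mem_insert_iff.mpr (.inl (by ext i; fin_cases i <;> rfl)))

theorem isLat_vec3 (a b c : ℤ) : IsLat (![a, b, c] : Pt 3) := by
  intro i; fin_cases i
  exacts [⟨a, rfl⟩, ⟨b, rfl⟩, ⟨c, rfl⟩]

theorem not_hasIDP_of_height_gap {N : ℕ} {P : Set (Pt N)} (i : Fin N)
    (hnonneg : ∀ x ∈ latPts P, 0 ≤ x i) (hgap : ∀ x ∈ latPts P, x i ≠ 1)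
    {α : Pt N} (hα : α ∈ latPts (dil 2 P)) (hαi : α i = 1) : ¬ HasIDP P := by
  intro hP
  obtain ⟨f, hf, rfl⟩ := hP 2 two_pos α hα
  obtain ⟨m, hm⟩ := (hf 0).2.exists_natCast_eq (hnonneg _ (hf 0))
  obtain ⟨n, hn⟩ := (hf 1).2.exists_natCast_eq (hnonneg _ (hf 1))
  have hmn : m + n = 1 := by
    simp only [Fin.sum_univ_two, Pi.add_apply, hm, hn] at hαi
    exact_mod_cast hαi
  rcases Nat.add_eq_one_iff.mp hmn with ⟨-, rfl⟩ | ⟨rfl, -⟩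
  · exact hgap _ (hf 1) (by simpa using hn)
  · exact hgap _ (hf 0) (by simpa using hm)

abbrev triangle : Set (Pt 3) := convexHull ℝ {![0,0,0], ![1,0,0], ![0,1,0]}

abbrev segment113 : Set (Pt 3) := convexHull ℝ {![0,0,0], ![1,1,3]}

theorem triangle_subset :
    triangle ⊆ {x | 0 ≤ x 0 ∧ 0 ≤ x 1 ∧ x 0 + x 1 ≤ 1 ∧ x 2 = 0} := by
  refine convexHull_min ?_ ?_
  · rintro v (rfl | rfl | rfl) <;> simp
  · rintro y ⟨hy0, hy1, hy, hy2⟩ z ⟨hz0, hz1, hz, hz2⟩ a b ha hb hab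
    simp only [Set.mem_ofPred_eq, Pi.add_apply, Pi.smul_apply, smul_eq_mul, hy2, hz2]
    refine ⟨by positivity, by positivity, ?_, by ring⟩
    nlinarith

theorem mem_segment113 {x : Pt 3} (hx : x ∈ segment113) :
    ∃ μ : ℝ, 0 ≤ μ ∧ μ ≤ 1 ∧ x = μ • ![1,1,3] := by
  rw [segment113, convexHull_pair] at hx
  obtain ⟨a, μ, ha, hμ, hab, rfl⟩ := hx
  exact ⟨μ, hμ, by linarith, by simp⟩

theorem triangle_hasIDP : HasIDP triangle := by
  rintro k - α ⟨hα, hlat⟩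
  obtain ⟨q, hq, rfl⟩ := Set.mem_smul_set.mp hα
  obtain ⟨hq0, hq1, hq, hq2⟩ := triangle_subset hq
  obtain ⟨a, ha⟩ := hlat.exists_natCast_eq (i := 0) (mul_nonneg k.cast_nonneg hq0)
  obtain ⟨b, hb⟩ := hlat.exists_natCast_eq (i := 1) (mul_nonneg k.cast_nonneg hq1)
  simp only [Pi.smul_apply, smul_eq_mul] at ha hb
  have hab : a + b ≤ k := by
    have : (a + b : ℝ) ≤ k := by
      rw [← ha, ← hb, ← mul_add]; exact mul_le_of_le_one_right (by positivity) hq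
    exact_mod_cast this
  have hα : (k : ℝ) • q = a • ![1,0,0] + b • ![0,1,0] := by
    ext i; fin_cases i <;> simp [ha, hb, hq2]
  rw [hα, ← Nat.add_sub_cancel' (Nat.le_of_add_right_le hab)]
  have he₁ : ![(1 : ℝ), 0, 0] ∈ latPts triangle :=
    ⟨subset_convexHull ℝ _ (by simp), by simpa using isLat_vec3 1 0 0⟩
  have he₂ : ![(0 : ℝ), 1, 0] ∈ latPts triangle :=
    ⟨subset_convexHull ℝ _ (by simp), by simpa using isLat_vec3 0 1 0⟩
  exact (decomposesIn_nsmul he₁ a).add (decomposesIn_nsmul_of_le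
    (zero_mem_convexHull_insert_vec3 _) he₂ (Nat.le_sub_of_add_le' hab))

theorem segment113_hasIDP : HasIDP segment113 := by
  rintro k - α ⟨hα, hlat⟩
  obtain ⟨q, hq, rfl⟩ := Set.mem_smul_set.mp hα
  obtain ⟨μ, hμ0, hμ1, rfl⟩ := mem_segment113 hq
  rw [smul_smul] at hlat ⊢
  obtain ⟨m, hm⟩ :=
    hlat.exists_natCast_eq (i := 0) (mul_nonneg (mul_nonneg k.cast_nonneg hμ0) zero_le_one)
  simp only [Pi.smul_apply, Matrix.cons_val_zero, smul_eq_mul, mul_one] at hm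
  have hmk : m ≤ k := by
    have : (m : ℝ) ≤ k := hm ▸ mul_le_of_le_one_right (by positivity) hμ1
    exact_mod_cast this
  rw [hm, Nat.cast_smul_eq_nsmul]
  exact decomposesIn_nsmul_of_le (zero_mem_convexHull_insert_vec3 _)
    ⟨subset_convexHull ℝ _ (by simp), by simpa using isLat_vec3 1 1 3⟩ hmk

theorem mem_triangle_add_segment113 {x : Pt 3} (hx : x ∈ triangle + segment113) :
    ∃ μ : ℝ, 0 ≤ μ ∧ μ ≤ 1 ∧ μ ≤ x 0 ∧ μ ≤ x 1 ∧ x 0 + x 1 ≤ 1 + 2 * μ ∧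
      x 2 = 3 * μ := by
  obtain ⟨t, ht, s, hs, rfl⟩ := Set.mem_add.mp hx
  obtain ⟨ht0, ht1, ht, ht2⟩ := triangle_subset ht
  obtain ⟨μ, hμ0, hμ1, rfl⟩ := mem_segment113 hs
  refine ⟨μ, hμ0, hμ1, ?_, ?_, ?_, ?_⟩ <;> simp [ht2] <;> linarith

theorem triangle_add_segment113_height_nonneg {x : Pt 3} (hx : x ∈ triangle + segment113) :
    0 ≤ x 2 := by
  obtain ⟨μ, hμ, -, -, -, -, h⟩ := mem_triangle_add_segment113 hx
  linarith

theorem triangle_add_segment113_height_ne_one {x : Pt 3}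
    (hx : x ∈ latPts (triangle + segment113)) : x 2 ≠ 1 := by
  intro h2
  obtain ⟨μ, -, -, h0, h1, hsum, hx2⟩ := mem_triangle_add_segment113 hx.1
  obtain ⟨m, hm⟩ := hx.2.exists_natCast_eq (i := 0) (by linarith)
  obtain ⟨n, hn⟩ := hx.2.exists_natCast_eq (i := 1) (by linarith)
  have hm1 : (1 : ℝ) ≤ m := Nat.one_le_cast.mpr (Nat.cast_pos (α := ℝ) |>.mp (by linarith))
  have hn1 : (1 : ℝ) ≤ n := Nat.one_le_cast.mpr (Nat.cast_pos (α := ℝ) |>.mp (by linarith))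
  linarith

theorem vec111_mem_latPts_dil_two :
    ![(1 : ℝ), 1, 1] ∈ latPts (dil 2 (triangle + segment113)) := by
  refine ⟨Set.mem_smul_set.mpr ⟨![1/3, 1/3, 0] + ![1/6, 1/6, 1/2], Set.add_mem_add ?_ ?_, ?_⟩,
    by simpa using isLat_vec3 1 1 1⟩
  · have : ![(1/3 : ℝ), 1/3, 0] =
        (2/3 : ℝ) • ((1/2 : ℝ) • ![1,0,0] + (1/2 : ℝ) • ![0,1,0]) := by
      ext i; fin_cases i <;> norm_num
    rw [this]
    refine (convex_convexHull ℝ _).smul_mem_of_zero_mem ?_ ?_ ⟨by norm_num, by norm_num⟩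
    · exact zero_mem_convexHull_insert_vec3 _
    · exact convex_convexHull ℝ _ (subset_convexHull ℝ _ (by simp))
        (subset_convexHull ℝ _ (by simp)) (by norm_num) (by norm_num) (by norm_num)
  · have : ![(1/6 : ℝ), 1/6, 1/2] = (1/6 : ℝ) • ![1,1,3] := by
      ext i; fin_cases i <;> norm_num
    rw [this]
    exact (convex_convexHull ℝ _).smul_mem_of_zero_mem
      (zero_mem_convexHull_insert_vec3 _)
      (subset_convexHull ℝ _ (by simp)) ⟨by norm_num, by norm_num⟩
  · ext i; fin_cases i <;> norm_num

/-- the triangle `conv{(0,0,0),(1,0,0),(0,1,0)}` and the segment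
`conv{(0,0,0),(1,1,3)}` each possess (IDP), but their Minkowski sum does not. -/
theorem minkowski_sum_not_idp :
    HasIDP (convexHull ℝ ({![0,0,0], ![1,0,0], ![0,1,0]} : Set (Pt 3))) ∧
    HasIDP (convexHull ℝ ({![0,0,0], ![1,1,3]} : Set (Pt 3))) ∧
    ¬ HasIDP (convexHull ℝ ({![0,0,0], ![1,0,0], ![0,1,0]} : Set (Pt 3)) +
              convexHull ℝ ({![0,0,0], ![1,1,3]} : Set (Pt 3))) :=
  ⟨triangle_hasIDP, segment113_hasIDP,
    not_hasIDP_of_height_gap 2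
      (fun _ hx => triangle_add_segment113_height_nonneg hx.1)
      (fun _ => triangle_add_segment113_height_ne_one) vec111_mem_latPts_dil_two rfl⟩
end
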